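/- For y ∈ ℝⁿ and τ > 0, if ‖y‖₁ ≤ τ then the projection of y onto the ℓ₁ ball B = {x : ‖x‖₁ ≤ τ} is y itself; otherwise, there exists θ > 0 such that the soft-thresholded vector S_θ(y), with (S_θ(y))_i = sign(y_i)·max(0, |y_i| - θ), satisfies ‖S_θ(y)‖₁ = τ and S_θ(y) is the projection of y onto B. -/

import Mathlib

noncomputable def softThresh (lam y : ℝ) : ℝ := Real.sign y * max 0 (|y| - lam)

/-!
Write `z = S_θ(y)`. Coordinatewise, `|y_i - z_i| ≤ θ` and `z_i (y_i - z_i) = θ |z_i|`, i.e.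
`y - z ∈ θ ∂‖·‖₁(z)`. Hence every `x` with `‖x‖₁ ≤ ‖z‖₁` satisfies
`⟨x - z, y - z⟩ ≤ θ (‖x‖₁ - ‖z‖₁) ≤ 0`, which is the variational characterization of the
projection of `y` onto the ball of radius `‖z‖₁`. The level `θ` comes from the intermediate value
theorem: `θ ↦ ‖S_θ(y)‖₁ = ∑ max 0 (|y_i| - θ)` is continuous, equals `‖y‖₁ > τ` at `0` and
vanishes at `‖y‖₁`.
-/

open Finset

section SoftThreshold

variable {θ : ℝ}

theorem abs_softThresh (hθ : 0 ≤ θ) (y : ℝ) : |softThresh θ y| = max 0 (|y| - θ) := by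
  rcases lt_trichotomy y 0 with hy | rfl | hy
  · simp [softThresh, Real.sign_of_neg hy]
  · simp [softThresh, hθ]
  · simp [softThresh, Real.sign_of_pos hy]

theorem abs_sub_softThresh_le (hθ : 0 ≤ θ) (y : ℝ) : |y - softThresh θ y| ≤ θ := by
  rcases lt_trichotomy y 0 with hy | rfl | hy
  · rw [softThresh, Real.sign_of_neg hy, abs_of_neg hy, abs_le]
    constructor <;> cases max_cases 0 (-y - θ) <;> linarith
  · simpa [softThresh] using hθ
  · rw [softThresh, Real.sign_of_pos hy, abs_of_pos hy, abs_le]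
    constructor <;> cases max_cases 0 (y - θ) <;> linarith

theorem softThresh_mul_sub_softThresh (hθ : 0 ≤ θ) (y : ℝ) :
    softThresh θ y * (y - softThresh θ y) = θ * |softThresh θ y| := by
  rw [abs_softThresh hθ]
  rcases lt_trichotomy y 0 with hy | rfl | hy
  · rw [softThresh, Real.sign_of_neg hy, abs_of_neg hy]
    rcases max_cases 0 (-y - θ) with ⟨h, -⟩ | ⟨h, -⟩ <;> rw [h] <;> ring
  · simp [softThresh, hθ]
  · rw [softThresh, Real.sign_of_pos hy, abs_of_pos hy]
    rcases max_cases 0 (y - θ) with ⟨h, -⟩ | ⟨h, -⟩ <;> rw [h] <;> ring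

end SoftThreshold

section Projection

variable {ι : Type*} [Fintype ι]

theorem sum_sq_sub_le_of_sum_mul_sub_nonpos {x y z : ι → ℝ}
    (h : ∑ i, (x i - z i) * (y i - z i) ≤ 0) :
    ∑ i, (z i - y i) ^ 2 ≤ ∑ i, (x i - y i) ^ 2 := by
  have hsplit : ∀ i, (x i - y i) ^ 2
      = (z i - y i) ^ 2 + ((x i - z i) ^ 2 - 2 * ((x i - z i) * (y i - z i))) := fun i => by ring
  simp_rw [hsplit, sum_add_distrib, sum_sub_distrib, ← mul_sum]
  linarith [sum_nonneg fun i (_ : i ∈ univ) => sq_nonneg (x i - z i)]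

theorem sum_sq_softThresh_sub_le {θ : ℝ} (hθ : 0 ≤ θ) (y x : ι → ℝ)
    (hx : ∑ i, |x i| ≤ ∑ i, |softThresh θ (y i)|) :
    ∑ i, (softThresh θ (y i) - y i) ^ 2 ≤ ∑ i, (x i - y i) ^ 2 := by
  apply sum_sq_sub_le_of_sum_mul_sub_nonpos
  set z := fun i => softThresh θ (y i)
  have hx_le : ∀ i, x i * (y i - z i) ≤ θ * |x i| := fun i =>
    calc x i * (y i - z i) ≤ |x i| * |y i - z i| := (le_abs_self _).trans (abs_mul _ _).le
      _ ≤ |x i| * θ := by gcongr; exact abs_sub_softThresh_le hθ (y i)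
      _ = θ * |x i| := mul_comm _ _
  calc ∑ i, (x i - z i) * (y i - z i)
      = ∑ i, x i * (y i - z i) - ∑ i, z i * (y i - z i) := by
        rw [← sum_sub_distrib]; simp_rw [sub_mul]
    _ ≤ ∑ i, θ * |x i| - ∑ i, θ * |z i| := by
        refine sub_le_sub (sum_le_sum fun i _ => hx_le i) (sum_congr rfl fun i _ => ?_).ge
        exact softThresh_mul_sub_softThresh hθ (y i)
    _ = θ * (∑ i, |x i| - ∑ i, |z i|) := by rw [mul_sub, mul_sum, mul_sum]
    _ ≤ 0 := mul_nonpos_of_nonneg_of_nonpos hθ (sub_nonpos.2 hx)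

theorem exists_pos_sum_max_sub_eq {a : ι → ℝ} (ha : ∀ i, 0 ≤ a i) {τ : ℝ} (hτ : 0 ≤ τ)
    (hlt : τ < ∑ i, a i) : ∃ θ, 0 < θ ∧ ∑ i, max 0 (a i - θ) = τ := by
  set f : ℝ → ℝ := fun θ => ∑ i, max 0 (a i - θ)
  have hf_cont : Continuous f := by fun_prop
  have hf_zero : f 0 = ∑ i, a i := sum_congr rfl fun i _ => by simp [ha i]
  have hf_sum : f (∑ i, a i) = 0 :=
    sum_eq_zero fun i hi => max_eq_left (sub_nonpos.2 (single_le_sum (fun j _ => ha j) hi))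
  obtain ⟨θ, hθ, hfθ⟩ := intermediate_value_Icc' (hτ.trans hlt.le) hf_cont.continuousOn
    (show τ ∈ Set.Icc (f (∑ i, a i)) (f 0) by rw [hf_sum, hf_zero]; exact ⟨hτ, hlt.le⟩)
  refine ⟨θ, hθ.1.lt_of_ne ?_, hfθ⟩
  rintro rfl
  exact hlt.ne' (hf_zero.symm.trans hfθ)

end Projection

/-- Projection onto the ℓ₁ ball {x : ‖x‖₁ ≤ τ}: if ‖y‖₁ ≤ τ the projection is y;
otherwise there is θ > 0 so that soft thresholding at level θ lands exactly on the
sphere ‖·‖₁ = τ and gives the (Euclidean) projection. -/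
theorem l1_ball_projection (n : ℕ) (τ : ℝ) (hτ : 0 < τ) (y : Fin n → ℝ) :
    (∑ i, |y i| ≤ τ →
      ∀ x : Fin n → ℝ, ∑ i, |x i| ≤ τ →
        ∑ i, (y i - y i)^2 ≤ ∑ i, (x i - y i)^2) ∧
    (¬ (∑ i, |y i| ≤ τ) →
      ∃ θ : ℝ, 0 < θ ∧
        (∑ i, |softThresh θ (y i)|) = τ ∧
        ∀ x : Fin n → ℝ, ∑ i, |x i| ≤ τ →
          ∑ i, (softThresh θ (y i) - y i)^2 ≤ ∑ i, (x i - y i)^2) := by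
  refine ⟨fun _ x _ => by simpa using sum_nonneg fun i (_ : i ∈ univ) => sq_nonneg (x i - y i),
    fun hgt => ?_⟩
  obtain ⟨θ, hθ, hsum⟩ :=
    exists_pos_sum_max_sub_eq (fun i => abs_nonneg (y i)) hτ.le (not_le.1 hgt)
  have hnorm : ∑ i, |softThresh θ (y i)| = τ := by simp_rw [abs_softThresh hθ.le]; exact hsum
  exact ⟨θ, hθ, hnorm, fun x hx => sum_sq_softThresh_sub_le hθ.le y x (hnorm ▸ hx)⟩
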